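/- arXiv:1909.12820 — 4 statements merged into one kernel-verified Lean document; each statement's English description precedes it below -/
import Mathlib

section
/- Let α, β ∈ ℤ^s be linearly independent vectors, each having both positive and negative entries, such that γ = α + β also has both positive and negative entries. Then the binomial x^{α₊} − x^{α₋} does not divide the binomial x^{γ₊} − x^{γ₋} in the polynomial ring K[x_1,…,x_s]. -/
open MvPolynomial

/-- For `v ∈ ℤ^s`, the monomial `x^{v₊}` with exponents the positive part of `v`. -/
noncomputable def posMonomial {s : ℕ} (K : Type*) [Field K] (v : Fin s → ℤ) :
    MvPolynomial (Fin s) K :=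
  ∏ i, X i ^ (v i).toNat

/-- For `v ∈ ℤ^s`, the binomial `x^{v₊} - x^{v₋}`. -/
noncomputable def binomOf {s : ℕ} (K : Type*) [Field K] (v : Fin s → ℤ) :
    MvPolynomial (Fin s) K :=
  posMonomial K v - posMonomial K (-v)

/-- `v` has both positive and negative entries. -/
def HasMixedSigns {s : ℕ} (v : Fin s → ℤ) : Prop :=
  (∃ i, 0 < v i) ∧ (∃ i, v i < 0)

/-!
Substituting `x_i ↦ t^{w_i}` into `K[t, t⁻¹]` sends `x^{v₊} - x^{v₋}` to `t^{w·v₊} - t^{w·v₋}`,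
which vanishes exactly when `w · v = 0`. So if `x^{α₊} - x^{α₋}` divides `x^{γ₊} - x^{γ₋}`, every
integer vector orthogonal to `α` is orthogonal to `γ`. For `α, γ` linearly independent the vector
`w = (α·γ) α - (α·α) γ` is orthogonal to `α` but not to `γ`: from `w · γ = 0` one would get
`w · w = (α·γ)(w·α) - (α·α)(w·γ) = 0`, hence `w = 0`, a nontrivial linear relation.
-/

open LaurentPolynomial

theorem LaurentPolynomial.T_injective (R : Type*) [Semiring R] [Nontrivial R] :
    Function.Injective (T : ℤ → R[T;T⁻¹]) :=
  AddMonoidAlgebra.single_left_injective one_ne_zero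

theorem LaurentPolynomial.prod_T {R ι : Type*} [CommSemiring R] (t : Finset ι) (f : ι → ℤ) :
    ∏ i ∈ t, (T (f i) : R[T;T⁻¹]) = T (∑ i ∈ t, f i) := by
  induction t using Finset.cons_induction with
  | empty => simp [T_zero]
  | cons a t ha ih => rw [Finset.prod_cons, Finset.sum_cons, T_add, ih]

theorem exists_dotProduct_eq_zero_and_ne_zero {R ι : Type*} [CommRing R] [LinearOrder R]
    [IsStrictOrderedRing R] [Fintype ι] {u v : ι → R} (h : LinearIndependent R ![u, v]) :
    ∃ w : ι → R, w ⬝ᵥ u = 0 ∧ w ⬝ᵥ v ≠ 0 := by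
  set w := (u ⬝ᵥ v) • u - (u ⬝ᵥ u) • v
  have hw : ∀ x, x ⬝ᵥ w = (u ⬝ᵥ v) * (x ⬝ᵥ u) - (u ⬝ᵥ u) * (x ⬝ᵥ v) := fun x => by
    simp only [w, dotProduct_sub, dotProduct_smul, smul_eq_mul]
  have hwu : w ⬝ᵥ u = 0 := by
    rw [dotProduct_comm, hw, dotProduct_comm u v]
    ring
  refine ⟨w, hwu, fun hwv => h.ne_zero 0 ?_⟩
  have hww : w ⬝ᵥ w = 0 := by
    rw [hw, hwu, hwv, mul_zero, mul_zero, sub_zero]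
  have hrel : (u ⬝ᵥ v) • u + (-(u ⬝ᵥ u)) • v = 0 := by
    rw [neg_smul, ← sub_eq_add_neg]
    exact dotProduct_self_eq_zero.mp hww
  have huu : u ⬝ᵥ u = 0 := neg_eq_zero.mp (LinearIndependent.pair_iff.mp h _ _ hrel).2
  simpa using dotProduct_self_eq_zero.mp huu

section Binomial

variable {s : ℕ} (K : Type*) [Field K]

theorem aeval_T_posMonomial (w v : Fin s → ℤ) :
    aeval (fun i => (T (w i) : K[T;T⁻¹])) (posMonomial K v)
      = T (w ⬝ᵥ fun i => ((v i).toNat : ℤ)) := by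
  rw [posMonomial, map_prod, dotProduct, ← prod_T]
  refine Finset.prod_congr rfl fun i _ => ?_
  rw [map_pow, aeval_X, T_pow, mul_comm]

theorem aeval_T_binomOf_eq_zero_iff (w v : Fin s → ℤ) :
    aeval (fun i => (T (w i) : K[T;T⁻¹])) (binomOf K v) = 0 ↔ w ⬝ᵥ v = 0 := by
  have hsplit : w ⬝ᵥ v
      = (w ⬝ᵥ fun i => ((v i).toNat : ℤ)) - w ⬝ᵥ fun i => (((-v) i).toNat : ℤ) := by
    rw [← dotProduct_sub]
    congr 1
    funext i
    exact (Int.toNat_sub_toNat_neg (v i)).symm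
  rw [binomOf, map_sub, aeval_T_posMonomial, aeval_T_posMonomial, sub_eq_zero,
    (T_injective K).eq_iff, hsplit, sub_eq_zero]

theorem dotProduct_eq_zero_of_binomOf_dvd {u v : Fin s → ℤ} (hdvd : binomOf K u ∣ binomOf K v)
    {w : Fin s → ℤ} (hw : w ⬝ᵥ u = 0) : w ⬝ᵥ v = 0 := by
  rw [← aeval_T_binomOf_eq_zero_iff K] at hw ⊢
  obtain ⟨q, hq⟩ := hdvd
  rw [hq, map_mul, hw, zero_mul]

end Binomial

theorem toric_splittings_stmt1_general {s : ℕ} (K : Type*) [Field K] (α β : Fin s → ℤ)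
    (hind : LinearIndependent ℤ ![α, β]) :
    ¬ (binomOf K α ∣ binomOf K (α + β)) := by
  obtain ⟨w, hwα, hwγ⟩ :=
    exists_dotProduct_eq_zero_and_ne_zero ((LinearIndependent.pair_add_right_iff (x := α) (y := β)).mpr hind)
  exact fun hdvd => hwγ (dotProduct_eq_zero_of_binomOf_dvd K hdvd hwα)

/-- If `α, β ∈ ℤ^s` are linearly independent, each with both positive and
negative entries, and `γ = α + β` also has both positive and negative entries, then
`x^{α₊} - x^{α₋}` does not divide `x^{γ₊} - x^{γ₋}` in `K[x_1, …, x_s]`. -/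
theorem toric_splittings_stmt1 {s : ℕ} (K : Type*) [Field K] (α β : Fin s → ℤ)
    (hind : LinearIndependent ℤ ![α, β])
    (hα : HasMixedSigns α) (hβ : HasMixedSigns β) (hγ : HasMixedSigns (α + β)) :
    ¬ (binomOf K α ∣ binomOf K (α + β)) :=
  toric_splittings_stmt1_general K α β hind
end

section
/- Let α, β ∈ ℤ^s be linearly independent vectors, each with both positive and negative entries, such that γ = α + β also has both positive and negative entries. Then x^{γ₊} − x^{γ₋} belongs to the ideal generated by x^{α₊} − x^{α₋} and x^{β₊} − x^{β₋} in K[x_1,…,x_s] if and only if supp(α₊) ∩ supp(β₋) = ∅ or supp(α₋) ∩ supp(β₊) = ∅. -/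
open MvPolynomial

/-!
Write `γ = α + β`. If no `i` has `α i > 0 > β i`, then `c = γ₊ - α` is an exponent vector and
`x^{γ₊} - x^{γ₋} = (x^{γ₊} - x^c) + (x^c - x^{γ₋})`, a monomial multiple of `x^{α₊} - x^{α₋}` plus
one of `x^{β₊} - x^{β₋}`; the other case is symmetric.

Conversely, if `α i > 0 > β i` and `α j < 0 < β j`, every point `γ₊ + m α + n β` with
`m + n = -1` has a negative entry at `i` or at `j`. So a move by `±α` or `±β` between exponent
vectors never leaves the half `m + n ≥ 0`, and summing the coefficients of the monomials with
exponent in that half is a linear functional vanishing on the ideal. It sends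
`x^{γ₊} - x^{γ₋}` to `1`, because by linear independence `γ₋ = γ₊ - α - β` has only the
coordinates `m = n = -1`.
-/

namespace ToricIdeal

variable {s : ℕ}

noncomputable def posExp (v : Fin s → ℤ) : Fin s →₀ ℕ :=
  Finsupp.equivFunOnFinite.symm fun i => (v i).toNat

def intVec (d : Fin s →₀ ℕ) : Fin s → ℤ := fun i => d i

@[simp] lemma posExp_apply (v : Fin s → ℤ) (i : Fin s) : posExp v i = (v i).toNat := rfl

@[simp] lemma intVec_apply (d : Fin s →₀ ℕ) (i : Fin s) : intVec d i = d i := rfl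

lemma intVec_add (a b : Fin s →₀ ℕ) : intVec (a + b) = intVec a + intVec b := by
  ext i; simp

lemma intVec_nonneg (d : Fin s →₀ ℕ) : 0 ≤ intVec d := fun i => by simp

lemma intVec_posExp (v : Fin s → ℤ) : intVec (posExp v) = v⁺ := by
  ext i; simp [posPart_def]

lemma posMonomial_eq_monomial (K : Type*) [Field K] (v : Fin s → ℤ) :
    posMonomial K v = monomial (posExp v) 1 := by
  rw [monomial_eq, C_1, one_mul, Finsupp.prod_fintype _ _ fun _ => pow_zero _]
  rfl

lemma binomOf_eq (K : Type*) [Field K] (v : Fin s → ℤ) :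
    binomOf K v = monomial (posExp v) 1 - monomial (posExp (-v)) 1 := by
  rw [binomOf, posMonomial_eq_monomial, posMonomial_eq_monomial]

lemma monomial_sub_monomial_eq_mul_binomOf (K : Type*) [Field K] {a b : Fin s →₀ ℕ}
    {v : Fin s → ℤ} (h : intVec a - intVec b = v) :
    monomial a (1 : K) - monomial b 1 = monomial (a ⊓ b) 1 * binomOf K v := by
  have hi i : (a i : ℤ) - b i = v i := by simpa using congrFun h i
  have ha : a = a ⊓ b + posExp v := by
    ext i; have := hi i
    simp only [Finsupp.coe_add, Pi.add_apply, Finsupp.inf_apply, posExp_apply]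
    omega
  have hb : b = a ⊓ b + posExp (-v) := by
    ext i; have := hi i
    simp only [Finsupp.coe_add, Pi.add_apply, Finsupp.inf_apply, posExp_apply, Pi.neg_apply]
    omega
  rw [binomOf_eq, mul_sub, monomial_mul, monomial_mul, one_mul, ← ha, ← hb]

theorem binomOf_add_mem_span_of_forall_not (K : Type*) [Field K] (α β : Fin s → ℤ)
    (h : ∀ i, ¬(0 < α i ∧ β i < 0)) :
    binomOf K (α + β) ∈ Ideal.span {binomOf K α, binomOf K β} := by
  set γ := α + β
  have hc : 0 ≤ γ⁺ - α := fun i => by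
    have := h i
    show 0 ≤ (α i + β i)⁺ - α i
    rw [posPart_def]
    omega
  have hcγ : intVec (posExp γ) - intVec (posExp (γ⁺ - α)) = α := by
    rw [intVec_posExp, intVec_posExp, posPart_eq_self.mpr hc, sub_sub_cancel]
  have hcβ : intVec (posExp (γ⁺ - α)) - intVec (posExp (-γ)) = β := by
    rw [intVec_posExp, intVec_posExp, posPart_eq_self.mpr hc, posPart_neg, sub_right_comm,
      posPart_sub_negPart, add_sub_cancel_left]
  rw [binomOf_eq K γ, ← sub_add_sub_cancel _ (monomial (posExp (γ⁺ - α)) 1),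
    monomial_sub_monomial_eq_mul_binomOf K hcγ, monomial_sub_monomial_eq_mul_binomOf K hcβ]
  exact Ideal.add_mem _ (Ideal.mul_mem_left _ _ (Ideal.subset_span (by simp)))
    (Ideal.mul_mem_left _ _ (Ideal.subset_span (by simp)))

section Functional

variable {σ R : Type*} [CommRing R]

lemma constr_basisMonomials_monomial (g : (σ →₀ ℕ) → R) (d : σ →₀ ℕ) (r : R) :
    (basisMonomials σ R).constr R g (monomial d r) = r * g d := by
  have : monomial d r = r • basisMonomials σ R d := by simp [smul_monomial]
  rw [this, map_smul, Module.Basis.constr_basis, smul_eq_mul]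

lemma constr_mul_monomial_sub_monomial (g : (σ →₀ ℕ) → R) {e e' : σ →₀ ℕ}
    (hg : ∀ u, g (u + e) = g (u + e')) (p : MvPolynomial σ R) :
    (basisMonomials σ R).constr R g (p * (monomial e 1 - monomial e' 1)) = 0 := by
  induction p using MvPolynomial.induction_on' with
  | monomial u r =>
    rw [mul_sub, monomial_mul, monomial_mul, map_sub, constr_basisMonomials_monomial,
      constr_basisMonomials_monomial, hg, sub_self]
  | add p q hp hq => rw [add_mul, map_add, hp, hq, add_zero]

end Functional

section UpperHalf

variable (α β : Fin s → ℤ)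

def UpperHalf (w : Fin s → ℤ) : Prop :=
  ∃ m n : ℤ, 0 ≤ m + n ∧ w = (α + β)⁺ + m • α + n • β

variable {α β}

lemma upperHalf_comm {w : Fin s → ℤ} : UpperHalf α β w ↔ UpperHalf β α w := by
  constructor <;>
  · rintro ⟨m, n, hmn, rfl⟩
    exact ⟨n, m, by omega, by rw [add_comm β, add_right_comm]⟩

lemma upperHalf_posPart : UpperHalf α β (α + β)⁺ := ⟨0, 0, le_rfl, by simp⟩

lemma not_upperHalf_negPart (hind : LinearIndependent ℤ ![α, β]) :
    ¬UpperHalf α β (α + β)⁻ := by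
  rintro ⟨m, n, hmn, h⟩
  have hγ := posPart_sub_negPart (α + β)
  rw [h] at hγ
  have : (m + 1) • α + (n + 1) • β = 0 := by linear_combination (norm := module) -hγ
  have := LinearIndependent.pair_iff.mp hind _ _ this
  omega

lemma not_nonneg_of_add_eq_neg_one {i j : Fin s} (hi : 0 < α i ∧ β i < 0)
    (hj : α j < 0 ∧ 0 < β j) {m n : ℤ} (hmn : m + n = -1) :
    ¬0 ≤ (α + β)⁺ + m • α + n • β := by
  intro h
  have hi' := h i
  have hj' := h j
  simp only [Pi.zero_apply, Pi.add_apply, Pi.posPart_apply, Pi.smul_apply, smul_eq_mul] at hi' hj'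
  obtain rfl : n = -1 - m := by omega
  rcases le_or_gt 0 m with hm | hm
  · have : (α j + β j)⁺ < β j := by rw [posPart_def]; exact sup_lt_iff.2 ⟨by linarith, hj.2⟩
    nlinarith [mul_nonneg hm (sub_nonneg.2 (hj.1.le.trans hj.2.le))]
  · have : (α i + β i)⁺ < α i := by rw [posPart_def]; exact sup_lt_iff.2 ⟨by linarith, hi.1⟩
    nlinarith [mul_nonneg (neg_nonneg.2 hm.le) (sub_nonneg.2 (hi.2.le.trans hi.1.le))]

lemma upperHalf_add_left_iff {i j : Fin s} (hi : 0 < α i ∧ β i < 0)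
    (hj : α j < 0 ∧ 0 < β j) {w : Fin s → ℤ} (hw : 0 ≤ w) :
    UpperHalf α β (w + α) ↔ UpperHalf α β w := by
  constructor
  · rintro ⟨m, n, hmn, h⟩
    have hw' : w = (α + β)⁺ + (m - 1) • α + n • β := by
      rw [eq_sub_of_add_eq h]; module
    refine ⟨m - 1, n, ?_, hw'⟩
    by_contra! hlt
    exact not_nonneg_of_add_eq_neg_one hi hj (by omega) (hw' ▸ hw)
  · rintro ⟨m, n, hmn, rfl⟩
    exact ⟨m + 1, n, by omega, by module⟩

lemma upperHalf_add_right_iff {i j : Fin s} (hi : 0 < α i ∧ β i < 0)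
    (hj : α j < 0 ∧ 0 < β j) {w : Fin s → ℤ} (hw : 0 ≤ w) :
    UpperHalf α β (w + β) ↔ UpperHalf α β w := by
  rw [upperHalf_comm, upperHalf_comm (w := w)]
  exact upperHalf_add_left_iff hj.symm hi.symm hw

end UpperHalf

theorem binomOf_add_notMem_span (K : Type*) [Field K] {α β : Fin s → ℤ}
    (hind : LinearIndependent ℤ ![α, β]) {i j : Fin s} (hi : 0 < α i ∧ β i < 0)
    (hj : α j < 0 ∧ 0 < β j) :
    binomOf K (α + β) ∉ Ideal.span {binomOf K α, binomOf K β} := by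
  classical
  let g : (Fin s →₀ ℕ) → K := fun d => if UpperHalf α β (intVec d) then 1 else 0
  have hg d : (basisMonomials _ K).constr K g (monomial d 1) = g d := by
    rw [constr_basisMonomials_monomial, one_mul]
  have hkill (v : Fin s → ℤ) (hv : ∀ w, 0 ≤ w → (UpperHalf α β (w + v) ↔ UpperHalf α β w))
      (p : MvPolynomial (Fin s) K) :
      (basisMonomials _ K).constr K g (p * binomOf K v) = 0 := by
    rw [binomOf_eq]
    refine constr_mul_monomial_sub_monomial g (fun u => ?_) p
    have : intVec (u + posExp v) = intVec (u + posExp (-v)) + v := by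
      rw [intVec_add, intVec_add, intVec_posExp, intVec_posExp, posPart_neg, add_assoc,
        ← sub_eq_iff_eq_add'.mp (posPart_sub_negPart v)]
    simp only [g, this, hv _ (intVec_nonneg _)]
  intro hmem
  obtain ⟨p, q, hpq⟩ := Ideal.mem_span_pair.mp hmem
  have h0 := congrArg ((basisMonomials _ K).constr K g) hpq
  rw [map_add, hkill α (fun w => upperHalf_add_left_iff hi hj) p,
    hkill β (fun w => upperHalf_add_right_iff hi hj) q, add_zero, binomOf_eq, map_sub, hg, hg,
    eq_comm, sub_eq_zero] at h0
  simp only [g, intVec_posExp, posPart_neg, upperHalf_posPart, not_upperHalf_negPart hind,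
    if_true, if_false] at h0
  exact one_ne_zero h0

end ToricIdeal

theorem toric_splittings_stmt2_general {s : ℕ} (K : Type*) [Field K] (α β : Fin s → ℤ)
    (hind : LinearIndependent ℤ ![α, β]) :
    binomOf K (α + β) ∈ Ideal.span {binomOf K α, binomOf K β} ↔
      ((∀ i, ¬(0 < α i ∧ β i < 0)) ∨ (∀ i, ¬(α i < 0 ∧ 0 < β i))) := by
  refine ⟨fun hmem => ?_, ?_⟩
  · by_contra! h
    obtain ⟨⟨i, hi⟩, ⟨j, hj⟩⟩ := h
    exact ToricIdeal.binomOf_add_notMem_span K hind hi hj hmem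
  · rintro (h | h)
    · exact ToricIdeal.binomOf_add_mem_span_of_forall_not K α β h
    · rw [add_comm, Set.pair_comm]
      exact ToricIdeal.binomOf_add_mem_span_of_forall_not K β α fun i hi => h i hi.symm

/-- Let `α, β ∈ ℤ^s` be linearly independent vectors, each with both positive
and negative entries, such that `γ = α + β` also has both positive and negative entries.
Then `x^{γ₊} - x^{γ₋}` belongs to the ideal generated by `x^{α₊} - x^{α₋}` and
`x^{β₊} - x^{β₋}` if and only if `supp(α₊) ∩ supp(β₋) = ∅` or `supp(α₋) ∩ supp(β₊) = ∅`. -/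
theorem toric_splittings_stmt2 {s : ℕ} (K : Type*) [Field K] (α β : Fin s → ℤ)
    (hind : LinearIndependent ℤ ![α, β])
    (hα : HasMixedSigns α) (hβ : HasMixedSigns β) (hγ : HasMixedSigns (α + β)) :
    binomOf K (α + β) ∈ Ideal.span {binomOf K α, binomOf K β} ↔
      ((∀ i, ¬(0 < α i ∧ β i < 0)) ∨ (∀ i, ¬(α i < 0 ∧ 0 < β i))) :=
  toric_splittings_stmt2_general K α β hind
end

section
/- Let α, β ∈ ℤ^s be as above with supp(α₊) ∩ supp(β₋) = ∅, and set γ = α + β and δ = β₊ − α₋. Then x^{δ₊}·(x^{α₊} − x^{α₋}) + x^{δ₋}·(x^{β₊} − x^{β₋}) = x^{γ₊} − x^{γ₋}; in particular x^{γ₊} − x^{γ₋} lies in the ideal generated by x^{α₊} − x^{α₋} and x^{β₊} − x^{β₋}. -/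
open MvPolynomial

/-! Each of the three products in the identity is a single monomial whose exponent is computed
coordinatewise; the hypothesis `supp(α₊) ∩ supp(β₋) = ∅` is exactly what makes
`δ₊ + α₊ = γ₊` and `δ₋ + β₋ = γ₋`, while `δ₊ + α₋ = δ₋ + β₊` is just `δ = β₊ - α₋`.
The two cross terms `x^{δ₊ + α₋}` and `x^{δ₋ + β₊}` then cancel. -/

section Monomials

variable {s : ℕ} {K : Type*} [Field K]

theorem posMonomial_mul (u v : Fin s → ℤ) :
    posMonomial K u * posMonomial K v = ∏ i, X i ^ ((u i).toNat + (v i).toNat) := by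
  simp only [posMonomial, ← Finset.prod_mul_distrib, pow_add]

theorem posMonomial_mul_eq_posMonomial {u v w : Fin s → ℤ}
    (h : ∀ i, (u i).toNat + (v i).toNat = (w i).toNat) :
    posMonomial K u * posMonomial K v = posMonomial K w := by
  rw [posMonomial_mul]
  simp only [h, posMonomial]

theorem posMonomial_mul_eq_posMonomial_mul {u v u' v' : Fin s → ℤ}
    (h : ∀ i, (u i).toNat + (v i).toNat = (u' i).toNat + (v' i).toNat) :
    posMonomial K u * posMonomial K v = posMonomial K u' * posMonomial K v' := by
  simp only [posMonomial_mul, h]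

theorem posMonomial_mul_binomOf_add_posMonomial_mul_binomOf {α β : Fin s → ℤ}
    (hsupp : ∀ i, ¬(0 < α i ∧ β i < 0)) :
    let δ : Fin s → ℤ := fun i => max (β i) 0 - max (-(α i)) 0
    posMonomial K δ * binomOf K α + posMonomial K (-δ) * binomOf K β = binomOf K (α + β) := by
  intro δ
  have hpos : posMonomial K δ * posMonomial K α = posMonomial K (α + β) :=
    posMonomial_mul_eq_posMonomial fun i => by
      have := hsupp i; simp only [δ, Pi.add_apply]; omega
  have hcross : posMonomial K δ * posMonomial K (-α) = posMonomial K (-δ) * posMonomial K β :=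
    posMonomial_mul_eq_posMonomial_mul fun i => by simp only [δ, Pi.neg_apply]; omega
  have hneg : posMonomial K (-δ) * posMonomial K (-β) = posMonomial K (-(α + β)) :=
    posMonomial_mul_eq_posMonomial fun i => by
      have := hsupp i; simp only [δ, Pi.neg_apply, Pi.add_apply]; omega
  simp only [binomOf, mul_sub, hpos, hcross, hneg]
  ring

end Monomials

theorem toric_splittings_stmt3_general {s : ℕ} (K : Type*) [Field K] (α β : Fin s → ℤ)
    (hsupp : ∀ i, ¬(0 < α i ∧ β i < 0))
    (δ : Fin s → ℤ) (hδ : δ = fun i => max (β i) 0 - max (-(α i)) 0) :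
    posMonomial K δ * binomOf K α + posMonomial K (-δ) * binomOf K β
        = binomOf K (α + β) ∧
      binomOf K (α + β) ∈ Ideal.span {binomOf K α, binomOf K β} := by
  subst hδ
  have key := posMonomial_mul_binomOf_add_posMonomial_mul_binomOf (K := K) hsupp
  exact ⟨key, Ideal.mem_span_pair.2 ⟨_, _, key⟩⟩

/-- With `α, β ∈ ℤ^s` each having positive and negative entries,
`γ = α + β` having positive and negative entries, and `supp(α₊) ∩ supp(β₋) = ∅`,
setting `δ = β₊ - α₋` we have the identity
`x^{δ₊}(x^{α₊} - x^{α₋}) + x^{δ₋}(x^{β₊} - x^{β₋}) = x^{γ₊} - x^{γ₋}`;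
in particular `x^{γ₊} - x^{γ₋}` lies in the ideal `⟨x^{α₊} - x^{α₋}, x^{β₊} - x^{β₋}⟩`. -/
theorem toric_splittings_stmt3 {s : ℕ} (K : Type*) [Field K] (α β : Fin s → ℤ)
    (hα : HasMixedSigns α) (hβ : HasMixedSigns β) (hγ : HasMixedSigns (α + β))
    (hsupp : ∀ i, ¬(0 < α i ∧ β i < 0))
    (δ : Fin s → ℤ) (hδ : δ = fun i => max (β i) 0 - max (-(α i)) 0) :
    posMonomial K δ * binomOf K α + posMonomial K (-δ) * binomOf K β
        = binomOf K (α + β) ∧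
      binomOf K (α + β) ∈ Ideal.span {binomOf K α, binomOf K β} :=
  toric_splittings_stmt3_general K α β hsupp δ hδ
end

section
/- Let G be a graph with induced subgraphs G_1 and G_2 forming a splitting of G along a single edge e (i.e., V(G) = V(G_1) ∪ V(G_2), V(G_1) ∩ V(G_2) is the two-vertex set of e, and removing these two vertices disconnects G_1∖e from G_2∖e). If G_1 is bipartite, then I_G = I_{G_1} + I_{G_2} in K[E(G)]. -/
open MvPolynomial

/-- The toric ideal of a graph: the graph has vertex set `V` and edges indexed by `E` via
`ε : E → Sym2 V`; the toric ideal is the kernel of the `K`-algebra map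
`K[e : E] → K[x : V]` sending the edge variable `e` to the product of the variables of its
two endpoints. -/
noncomputable def graphToricIdeal (K : Type*) [Field K] {V E : Type*} (ε : E → Sym2 V) :
    Ideal (MvPolynomial E K) :=
  RingHom.ker (MvPolynomial.aeval
    (fun e => Sym2.lift ⟨fun a b => (X a * X b : MvPolynomial V K),
      fun a b => by ring⟩ (ε e)) : MvPolynomial E K →ₐ[K] MvPolynomial V K)

/-!
The toric ideal `I_G` is spanned by the binomials `X^a - X^b` for edge multisets `a`, `b` with
the same vertex degrees.  Split `a = a₁ + a₂` and `b = b₁ + b₂` into edges of `G₁` and edges of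
`G₂` only.  Away from `u` and `v` the degrees of `a₁` and `b₁` agree.  Each colour class of the
bipartite graph `G₁` meets every edge once, so the degrees of `a₁` summed over a colour class
give `|a₁|`; as `u` and `v` have different colours, `|a₁| = |b₁| + k` forces `a₁` to have the
degrees of `b₁ + k e`.  Then
`X^a - X^b = X^{a₂} (X^{a₁} - X^{b₁ + k e}) + X^{b₁} (X^{a₂ + k e} - X^{b₂})`,
a combination of a binomial of `I_{G₁}` and one of `I_{G₂}`.
-/

section MonomialMap

variable {R ι σ : Type*} [CommRing R]

lemma aeval_monomial_monomial (d : ι → σ →₀ ℕ) (w : ι →₀ ℕ) (r : R) :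
    aeval (fun i => monomial (d i) (1 : R)) (monomial w r) =
      monomial (Finsupp.linearCombination ℕ d w) r := by
  simp_rw [aeval_monomial, monomial_pow, one_pow, ← C_eq_algebraMap,
    ← monomial_finsupp_sum_index, ← Finsupp.linearCombination_apply]

lemma aeval_monomial_one_eq_mapDomain (d : ι → σ →₀ ℕ) (p : MvPolynomial ι R) :
    aeval (fun i => monomial (d i) (1 : R)) p =
      AddMonoidAlgebra.mapDomain (Finsupp.linearCombination ℕ d) p := by
  induction p using MvPolynomial.induction_on' with
  | monomial w r =>
    exact (aeval_monomial_monomial d w r).trans AddMonoidAlgebra.mapDomain_single.symm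
  | add p q hp hq => rw [map_add, hp, hq, AddMonoidAlgebra.mapDomain_add]

lemma AddMonoidAlgebra.mapDomain_comp {k G H I : Type*} [Semiring k] (f : G → H) (g : H → I)
    (x : AddMonoidAlgebra k G) : mapDomain (g ∘ f) x = mapDomain g (mapDomain f x) := by
  ext; simp [Finsupp.mapDomain_comp]

lemma sub_mapDomain_mem {J : Ideal (MvPolynomial ι R)} {f : (ι →₀ ℕ) → ι →₀ ℕ}
    (hJ : ∀ w, monomial w (1 : R) - monomial (f w) 1 ∈ J) (p : MvPolynomial ι R) :
    p - AddMonoidAlgebra.mapDomain f p ∈ J := by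
  induction p using MvPolynomial.induction_on' with
  | monomial w r =>
    have hmonomial : monomial w r - AddMonoidAlgebra.mapDomain f (monomial w r) =
        C r * (monomial w (1 : R) - monomial (f w) 1) := by
      rw [mul_sub, C_mul_monomial, C_mul_monomial, mul_one]
      exact congrArg _ AddMonoidAlgebra.mapDomain_single
    rw [hmonomial]
    exact J.mul_mem_left _ (hJ w)
  | add p q hp hq =>
    rw [AddMonoidAlgebra.mapDomain_add, add_sub_add_comm]
    exact J.add_mem hp hq

lemma ker_aeval_monomial_le (d : ι → σ →₀ ℕ) {J : Ideal (MvPolynomial ι R)}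
    (hJ : ∀ a b, Finsupp.linearCombination ℕ d a = Finsupp.linearCombination ℕ d b →
      monomial a (1 : R) - monomial b 1 ∈ J) :
    RingHom.ker (aeval fun i => monomial (d i) (1 : R)) ≤ J := by
  intro p hp
  set L := Finsupp.linearCombination ℕ d
  -- Move every exponent `w` to a chosen representative of its fibre `L⁻¹(L w)`: this changes
  -- `p` by an element of `J`, and kills it, since the image of `p` under `L` is zero.
  have hsection : ∀ w, L (Function.invFun L (L w)) = L w := fun w => Function.invFun_eq ⟨w, rfl⟩
  have hvanish : AddMonoidAlgebra.mapDomain (Function.invFun L ∘ L) p = 0 := by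
    rw [AddMonoidAlgebra.mapDomain_comp, ← aeval_monomial_one_eq_mapDomain,
      RingHom.mem_ker.mp hp, AddMonoidAlgebra.mapDomain_zero]
  have hdiff := sub_mapDomain_mem (f := Function.invFun L ∘ L)
    (fun w => hJ w _ (hsection w).symm) p
  rwa [hvanish, sub_zero] at hdiff

end MonomialMap

lemma Finsupp.degree_add_apply_eq_of_eqOn {σ : Type*} {f g : σ →₀ ℕ} {x : σ}
    (h : ∀ y, y ≠ x → f y = g y) : f.degree + g x = g.degree + f x := by
  have herase : f.erase x = g.erase x := by
    ext y
    by_cases hy : y = x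
    · simp [hy]
    · simp [Finsupp.erase_ne hy, h y hy]
  rw [← f.erase_add_single x, ← g.erase_add_single x, map_add, map_add, Finsupp.degree_single,
    Finsupp.degree_single, herase]
  simp only [Finsupp.coe_add, Pi.add_apply, Finsupp.erase_same, Finsupp.single_eq_same, zero_add]
  ring

lemma Finsupp.mapDomain_subtypeVal_subtypeDomain {α M : Type*} [AddCommMonoid M] {P : α → Prop}
    {w : α →₀ M} (hw : ∀ a ∈ w.support, P a) :
    Finsupp.mapDomain Subtype.val (w.subtypeDomain P) = w := by
  classical
  rw [← Finsupp.extendDomain_subtypeDomain w hw, Finsupp.subtypeDomain_extendDomain,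
    Finsupp.extendDomain_eq_embDomain_subtype, Finsupp.embDomain_eq_mapDomain]
  rfl

namespace Sym2

variable {V : Type*}

noncomputable def incidence (z : Sym2 V) : V →₀ ℕ :=
  Sym2.lift ⟨fun x y => Finsupp.single x 1 + Finsupp.single y 1, fun _ _ => add_comm _ _⟩ z

@[simp]
lemma incidence_mk (x y : V) : s(x, y).incidence = Finsupp.single x 1 + Finsupp.single y 1 := rfl

lemma incidence_mk_apply_left {x y : V} (h : x ≠ y) : s(x, y).incidence x = 1 := by
  simp [h]

lemma incidence_mk_apply_right {x y : V} (h : x ≠ y) : s(x, y).incidence y = 1 := by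
  simp [h]

lemma incidence_apply_of_notMem {z : Sym2 V} {x : V} (hx : x ∉ z) : z.incidence x = 0 := by
  induction z using Sym2.ind with
  | _ p q =>
    rw [Sym2.mem_iff, not_or] at hx
    simp [Ne.symm hx.1, Ne.symm hx.2]

lemma degree_filter_incidence {z : Sym2 V} (c : V → Bool)
    (hc : ∀ x y, z = s(x, y) → c x ≠ c y) : (z.incidence.filter fun x => c x).degree = 1 := by
  induction z using Sym2.ind with
  | _ x y =>
    have hxy := hc x y rfl
    cases hx : c x <;> cases hy : c y <;> simp_all [Finsupp.filter_single_of_pos,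
      Finsupp.filter_single_of_neg]

end Sym2

section GraphToricIdeal

variable {V E : Type*} {K : Type*} [Field K]

noncomputable def degreeVec (ε : E → Sym2 V) : (E →₀ ℕ) →ₗ[ℕ] V →₀ ℕ :=
  Finsupp.linearCombination ℕ fun e => (ε e).incidence

variable (K) in
/-- `I_{G'}` viewed inside `K[E(G)]`, for the subgraph `G'` of `G` made of the edges satisfying
`P`. -/
noncomputable def subgraphToricIdeal (ε : E → Sym2 V) (P : E → Prop) :
    Ideal (MvPolynomial E K) :=
  Ideal.map (rename (Subtype.val : {e // P e} → E)).toRingHom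
    (graphToricIdeal K fun e : {e // P e} => ε e.val)

variable (K) in
lemma graphToricIdeal_eq_ker (ε : E → Sym2 V) :
    graphToricIdeal K ε = RingHom.ker (aeval fun e => monomial (ε e).incidence (1 : K)) := by
  unfold graphToricIdeal
  congr
  funext e
  induction ε e using Sym2.ind with
  | _ x y => simp only [Sym2.lift_mk, Sym2.incidence_mk, X, monomial_mul, mul_one]

lemma graphToricIdeal_le_of_binomial_mem (ε : E → Sym2 V) {J : Ideal (MvPolynomial E K)}
    (hJ : ∀ a b, degreeVec ε a = degreeVec ε b → monomial a (1 : K) - monomial b 1 ∈ J) :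
    graphToricIdeal K ε ≤ J := by
  rw [graphToricIdeal_eq_ker]
  exact ker_aeval_monomial_le _ hJ

lemma binomial_mem_graphToricIdeal (ε : E → Sym2 V) {a b : E →₀ ℕ}
    (hab : degreeVec ε a = degreeVec ε b) :
    monomial a (1 : K) - monomial b 1 ∈ graphToricIdeal K ε := by
  rw [graphToricIdeal_eq_ker, RingHom.mem_ker, map_sub, aeval_monomial_monomial,
    aeval_monomial_monomial]
  exact sub_eq_zero.mpr (congrArg (monomial · 1) hab)

lemma subgraphToricIdeal_le (ε : E → Sym2 V) (P : E → Prop) :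
    subgraphToricIdeal K ε P ≤ graphToricIdeal K ε := by
  rw [subgraphToricIdeal, Ideal.map_le_iff_le_comap]
  intro q hq
  rw [graphToricIdeal_eq_ker, RingHom.mem_ker] at hq
  rw [Ideal.mem_comap, graphToricIdeal_eq_ker, RingHom.mem_ker]
  exact (aeval_rename _ _ _).trans hq

lemma binomial_mem_subgraphToricIdeal (ε : E → Sym2 V) {P : E → Prop} {a b : E →₀ ℕ}
    (ha : ∀ e ∈ a.support, P e) (hb : ∀ e ∈ b.support, P e)
    (hab : degreeVec ε a = degreeVec ε b) :
    monomial a (1 : K) - monomial b 1 ∈ subgraphToricIdeal K ε P := by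
  have hdeg : ∀ w : E →₀ ℕ, (∀ e ∈ w.support, P e) →
      degreeVec (fun e : {e // P e} => ε e.val) (w.subtypeDomain P) = degreeVec ε w :=
    fun w hw =>
      (Finsupp.linearCombination_mapDomain (v' := fun e => (ε e).incidence) ℕ _ _).symm.trans
        (congrArg _ (Finsupp.mapDomain_subtypeVal_subtypeDomain hw))
  rw [← Finsupp.mapDomain_subtypeVal_subtypeDomain ha,
    ← Finsupp.mapDomain_subtypeVal_subtypeDomain hb, ← rename_monomial, ← rename_monomial,
    ← map_sub]
  exact Ideal.mem_map_of_mem _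
    (binomial_mem_graphToricIdeal _ (by rw [hdeg a ha, hdeg b hb, hab]))

lemma degreeVec_apply_eq_zero (ε : E → Sym2 V) {W : Set V} {a : E →₀ ℕ}
    (ha : ∀ e ∈ a.support, ∀ x ∈ ε e, x ∈ W) {x : V} (hx : x ∉ W) : degreeVec ε a x = 0 := by
  rw [degreeVec, Finsupp.linearCombination_apply, Finsupp.sum_apply]
  exact Finset.sum_eq_zero fun e he => by
    simp only [Finsupp.smul_apply, Sym2.incidence_apply_of_notMem fun h => hx (ha e he x h),
      smul_zero]

/-- Each properly coloured edge has exactly one end in the colour class. -/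
lemma degree_filter_degreeVec (ε : E → Sym2 V) (c : V → Bool) {a : E →₀ ℕ}
    (hc : ∀ e ∈ a.support, ∀ x y, ε e = s(x, y) → c x ≠ c y) :
    ((degreeVec ε a).filter fun x => c x).degree = a.degree := by
  let count : (V →₀ ℕ) →+ ℕ := Finsupp.degree.comp (Finsupp.filterAddHom fun x => c x)
  change count (degreeVec ε a) = a.degree
  rw [degreeVec, Finsupp.linearCombination_apply, map_finsuppSum, Finsupp.degree_apply]
  refine Finset.sum_congr rfl fun e he => ?_
  change count (a e • (ε e).incidence) = a e
  rw [map_nsmul, smul_eq_mul]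
  change a e * ((ε e).incidence.filter fun x => c x).degree = a e
  rw [Sym2.degree_filter_incidence c (hc e he), mul_one]

lemma degreeVec_apply_add_degree_eq (ε : E → Sym2 V) (c : V → Bool) {a b : E →₀ ℕ}
    (ha : ∀ e ∈ a.support, ∀ x y, ε e = s(x, y) → c x ≠ c y)
    (hb : ∀ e ∈ b.support, ∀ x y, ε e = s(x, y) → c x ≠ c y) {x y : V} (hxy : c x ≠ c y)
    (hoff : ∀ z, z ≠ x → z ≠ y → degreeVec ε a z = degreeVec ε b z) :
    degreeVec ε a x + b.degree = degreeVec ε b x + a.degree := by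
  wlog hx : c x = true generalizing c
  · have hproper : ∀ w : E →₀ ℕ, (∀ e ∈ w.support, ∀ x y, ε e = s(x, y) → c x ≠ c y) →
        ∀ e ∈ w.support, ∀ x y, ε e = s(x, y) → (!c x) ≠ !c y := fun w hw e he x y hxy h =>
      hw e he x y hxy (by simpa using h)
    exact this (fun z => !c z) (hproper a ha) (hproper b hb) (by simpa using hxy)
      (by simpa using hx)
  have hy : c y = false := by simpa [hx] using hxy.symm
  have hfilter := Finsupp.degree_add_apply_eq_of_eqOn (x := x)
    (f := (degreeVec ε a).filter fun z => c z) (g := (degreeVec ε b).filter fun z => c z)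
    (fun z hz => by
      rw [Finsupp.filter_apply, Finsupp.filter_apply]
      split_ifs with hcz
      · exact hoff z hz (by rintro rfl; simp_all)
      · rfl)
  rw [degree_filter_degreeVec ε c ha, degree_filter_degreeVec ε c hb] at hfilter
  simp only [Finsupp.filter_apply, hx, if_true] at hfilter
  omega

lemma degreeVec_add_smul_incidence_eq (ε : E → Sym2 V) (c : V → Bool) {a b : E →₀ ℕ}
    (ha : ∀ e ∈ a.support, ∀ x y, ε e = s(x, y) → c x ≠ c y)
    (hb : ∀ e ∈ b.support, ∀ x y, ε e = s(x, y) → c x ≠ c y) {u v : V} (huv : c u ≠ c v)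
    (hoff : ∀ z, z ≠ u → z ≠ v → degreeVec ε a z = degreeVec ε b z) :
    degreeVec ε a + b.degree • s(u, v).incidence =
      degreeVec ε b + a.degree • s(u, v).incidence := by
  have hne : u ≠ v := fun h => huv (congrArg c h)
  ext z
  rw [Finsupp.add_apply, Finsupp.add_apply, Finsupp.smul_apply, Finsupp.smul_apply, smul_eq_mul,
    smul_eq_mul]
  by_cases hzu : z = u
  · subst hzu
    rw [Sym2.incidence_mk_apply_left hne, mul_one, mul_one]
    exact degreeVec_apply_add_degree_eq ε c ha hb huv hoff
  by_cases hzv : z = v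
  · subst hzv
    rw [Sym2.incidence_mk_apply_right hne, mul_one, mul_one]
    exact degreeVec_apply_add_degree_eq ε c ha hb huv.symm fun z hzv hzu => hoff z hzu hzv
  rw [Sym2.incidence_apply_of_notMem (by simp [hzu, hzv]), mul_zero, mul_zero, add_zero,
    add_zero]
  exact hoff z hzu hzv

lemma degreeVec_apply_eq_of_split (ε : E → Sym2 V) {W₁ W₂ : Set V} {u v : V}
    (hint : W₁ ∩ W₂ ⊆ {u, v}) {a₁ a₂ b₁ b₂ : E →₀ ℕ}
    (ha₁ : ∀ e ∈ a₁.support, ∀ x ∈ ε e, x ∈ W₁) (hb₁ : ∀ e ∈ b₁.support, ∀ x ∈ ε e, x ∈ W₁)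
    (ha₂ : ∀ e ∈ a₂.support, ∀ x ∈ ε e, x ∈ W₂) (hb₂ : ∀ e ∈ b₂.support, ∀ x ∈ ε e, x ∈ W₂)
    (hab : degreeVec ε (a₁ + a₂) = degreeVec ε (b₁ + b₂)) {z : V} (hzu : z ≠ u) (hzv : z ≠ v) :
    degreeVec ε a₁ z = degreeVec ε b₁ z := by
  by_cases hz₁ : z ∈ W₁
  · have hz₂ : z ∉ W₂ := fun hz₂ => by
      rcases hint ⟨hz₁, hz₂⟩ with h | h
      exacts [hzu h, hzv h]
    simpa [degreeVec_apply_eq_zero ε ha₂ hz₂, degreeVec_apply_eq_zero ε hb₂ hz₂] using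
      DFunLike.congr_fun hab z
  · rw [degreeVec_apply_eq_zero ε ha₁ hz₁, degreeVec_apply_eq_zero ε hb₁ hz₁]

lemma binomial_mem_sup_of_transfer (ε : E → Sym2 V) {P₁ P₂ : E → Prop} {e₀ : E}
    (h₁ : P₁ e₀) (h₂ : P₂ e₀) {a₁ a₂ b₁ b₂ : E →₀ ℕ} {k : ℕ}
    (ha₁ : ∀ e ∈ a₁.support, P₁ e) (hb₁ : ∀ e ∈ b₁.support, P₁ e)
    (ha₂ : ∀ e ∈ a₂.support, P₂ e) (hb₂ : ∀ e ∈ b₂.support, P₂ e)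
    (hab : degreeVec ε (a₁ + a₂) = degreeVec ε (b₁ + b₂))
    (htransfer : degreeVec ε a₁ = degreeVec ε (b₁ + Finsupp.single e₀ k)) :
    monomial (a₁ + a₂) (1 : K) - monomial (b₁ + b₂) 1 ∈
      subgraphToricIdeal K ε P₁ ⊔ subgraphToricIdeal K ε P₂ := by
  classical
  have hsupport : ∀ {P : E → Prop} {w : E →₀ ℕ}, (∀ e ∈ w.support, P e) → P e₀ →
      ∀ e ∈ (w + Finsupp.single e₀ k).support, P e := fun hw h₀ e he => by
    rcases Finset.mem_union.mp (Finsupp.support_add he) with he | he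
    · exact hw e he
    · rwa [Finset.mem_singleton.mp (Finsupp.support_single_subset he)]
  have htransfer₂ : degreeVec ε (a₂ + Finsupp.single e₀ k) = degreeVec ε b₂ := by
    rw [map_add, map_add, htransfer, map_add, add_assoc] at hab
    rw [map_add, add_comm]
    exact add_left_cancel hab
  have hsplit : monomial (a₁ + a₂) (1 : K) - monomial (b₁ + b₂) 1 =
      monomial a₂ 1 * (monomial a₁ 1 - monomial (b₁ + Finsupp.single e₀ k) 1) +
        monomial b₁ 1 * (monomial (a₂ + Finsupp.single e₀ k) 1 - monomial b₂ 1) := by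
    simp only [mul_sub, monomial_mul, mul_one]
    rw [add_comm a₂ a₁, add_left_comm a₂ b₁]
    abel
  rw [hsplit]
  exact add_mem
    (Ideal.mem_sup_left (Ideal.mul_mem_left _ _
      (binomial_mem_subgraphToricIdeal ε ha₁ (hsupport hb₁ h₁) htransfer)))
    (Ideal.mem_sup_right (Ideal.mul_mem_left _ _
      (binomial_mem_subgraphToricIdeal ε (hsupport ha₂ h₂) hb₂ htransfer₂)))

theorem binomial_mem_sup_of_splitting (ε : E → Sym2 V) {W₁ W₂ : Set V} {u v : V} {e₀ : E}
    (he₀ : ε e₀ = s(u, v)) (hint : W₁ ∩ W₂ = {u, v})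
    (hedges : ∀ e : E, (∀ x ∈ ε e, x ∈ W₁) ∨ (∀ x ∈ ε e, x ∈ W₂)) (c : V → Bool)
    (hc : ∀ e : E, (∀ x ∈ ε e, x ∈ W₁) → ∀ x y, ε e = s(x, y) → c x ≠ c y)
    {a b : E →₀ ℕ} (hab : degreeVec ε a = degreeVec ε b) :
    monomial a (1 : K) - monomial b 1 ∈
      subgraphToricIdeal K ε (fun e => ∀ x ∈ ε e, x ∈ W₁) ⊔
        subgraphToricIdeal K ε (fun e => ∀ x ∈ ε e, x ∈ W₂) := by
  classical
  set P₁ : E → Prop := fun e => ∀ x ∈ ε e, x ∈ W₁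
  wlog hdeg : (b.filter P₁).degree ≤ (a.filter P₁).degree generalizing a b
  · rw [← neg_sub]
    exact neg_mem (this hab.symm (le_of_not_ge hdeg))
  obtain ⟨k, hk⟩ := Nat.exists_eq_add_of_le hdeg
  have he₀W : ∀ x ∈ ε e₀, x ∈ W₁ ∩ W₂ := by
    rw [hint, he₀]
    intro x hx
    simpa [Sym2.mem_iff] using hx
  have hsupp₁ : ∀ w : E →₀ ℕ, ∀ e ∈ (w.filter P₁).support, P₁ e := fun w e he => by
    rw [Finsupp.support_filter, Finset.mem_filter] at he
    exact he.2
  have hsupp₂ : ∀ w : E →₀ ℕ, ∀ e ∈ (w.filter fun e => ¬ P₁ e).support, ∀ x ∈ ε e, x ∈ W₂ :=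
    fun w e he => by
      rw [Finsupp.support_filter, Finset.mem_filter] at he
      exact (hedges e).resolve_left he.2
  rw [← Finsupp.filter_add_filter_not a P₁, ← Finsupp.filter_add_filter_not b P₁] at hab ⊢
  have hbalance := degreeVec_add_smul_incidence_eq ε c (fun e he => hc e (hsupp₁ a e he))
    (fun e he => hc e (hsupp₁ b e he)) (hc e₀ (fun x hx => (he₀W x hx).1) u v he₀)
    (fun z hzu hzv => degreeVec_apply_eq_of_split ε hint.subset (hsupp₁ a) (hsupp₁ b)
      (hsupp₂ a) (hsupp₂ b) hab hzu hzv)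
  refine binomial_mem_sup_of_transfer ε (fun x hx => (he₀W x hx).1) (fun x hx => (he₀W x hx).2)
    (hsupp₁ a) (hsupp₁ b) (hsupp₂ a) (hsupp₂ b) hab (k := k) ?_
  rw [hk, add_smul, ← add_assoc, add_right_comm] at hbalance
  rw [map_add, degreeVec, Finsupp.linearCombination_single, he₀]
  exact add_right_cancel hbalance

end GraphToricIdeal

theorem toric_splittings_stmt13_general {V E : Type*} (K : Type*) [Field K]
    (ε : E → Sym2 V)
    (W₁ W₂ : Set V) (u v : V) (e₀ : E) (he₀ : ε e₀ = s(u, v))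
    (hint : W₁ ∩ W₂ = {u, v})
    (hedges : ∀ e : E, (∀ x ∈ ε e, x ∈ W₁) ∨ (∀ x ∈ ε e, x ∈ W₂))
    (hbip : ∃ c : V → Bool, ∀ e : E, (∀ x ∈ ε e, x ∈ W₁) →
      ∀ x y, ε e = s(x, y) → c x ≠ c y) :
    graphToricIdeal K ε =
      Ideal.map (MvPolynomial.rename
            (Subtype.val : {e : E // ∀ x ∈ ε e, x ∈ W₁} → E)).toRingHom
          (graphToricIdeal K (fun e : {e : E // ∀ x ∈ ε e, x ∈ W₁} => ε e.val)) ⊔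
        Ideal.map (MvPolynomial.rename
            (Subtype.val : {e : E // ∀ x ∈ ε e, x ∈ W₂} → E)).toRingHom
          (graphToricIdeal K (fun e : {e : E // ∀ x ∈ ε e, x ∈ W₂} => ε e.val)) := by
  obtain ⟨c, hc⟩ := hbip
  change graphToricIdeal K ε = subgraphToricIdeal K ε _ ⊔ subgraphToricIdeal K ε _
  exact le_antisymm
    (graphToricIdeal_le_of_binomial_mem ε fun a b hab =>
      binomial_mem_sup_of_splitting ε he₀ hint hedges c hc hab)
    (sup_le (subgraphToricIdeal_le ε _) (subgraphToricIdeal_le ε _))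

/-- Let `G` be a graph whose induced subgraphs `G₁` (on `W₁`) and `G₂`
(on `W₂`) form a splitting of `G` along a single edge `e = {u, v}`: the vertex subsets cover
`V(G)`, intersect exactly in `{u, v}`, and every edge of `G` lies within `W₁` or within `W₂`
(equivalently, removing `u` and `v` disconnects the two remainders).  If `G₁` is bipartite,
then `I_G = I_{G₁} + I_{G₂}` in `K[E(G)]` (the toric ideals of `G₁` and `G₂` being viewed in
`K[E(G)]` via the inclusion of edges). -/
theorem toric_splittings_stmt13 {V E : Type*} (K : Type*) [Field K]
    (ε : E → Sym2 V) (hinj : Function.Injective ε) (hnd : ∀ e, ¬ (ε e).IsDiag)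
    (W₁ W₂ : Set V) (u v : V) (huv : u ≠ v) (e₀ : E) (he₀ : ε e₀ = s(u, v))
    (hcover : W₁ ∪ W₂ = Set.univ) (hint : W₁ ∩ W₂ = {u, v})
    (hedges : ∀ e : E, (∀ x ∈ ε e, x ∈ W₁) ∨ (∀ x ∈ ε e, x ∈ W₂))
    (hbip : ∃ c : V → Bool, ∀ e : E, (∀ x ∈ ε e, x ∈ W₁) →
      ∀ x y, ε e = s(x, y) → c x ≠ c y) :
    graphToricIdeal K ε =
      Ideal.map (MvPolynomial.rename
            (Subtype.val : {e : E // ∀ x ∈ ε e, x ∈ W₁} → E)).toRingHom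
          (graphToricIdeal K (fun e : {e : E // ∀ x ∈ ε e, x ∈ W₁} => ε e.val)) ⊔
        Ideal.map (MvPolynomial.rename
            (Subtype.val : {e : E // ∀ x ∈ ε e, x ∈ W₂} → E)).toRingHom
          (graphToricIdeal K (fun e : {e : E // ∀ x ∈ ε e, x ∈ W₂} => ε e.val)) :=
  toric_splittings_stmt13_general K ε W₁ W₂ u v e₀ he₀ hint hedges hbip
end
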